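/- Let g ∈ F_{q^m}^n with rank_q(g) = n ≤ m, and let G̃ ∈ F_{q^m}^{(n−t−1)×n} be the Moore matrix with rows g, g^{[1]}, …, g^{[n−t−2]} (entrywise q-power Frobenius). Let E ∈ F_{q^m}^{ℓ×n} with rank_{F_q}(E) = rank_{F_{q^m}}(E) = t, and let Z be the vertical stack of E, E^{[1]}, …, E^{[n−k−t−1]} for some k with t ≤ n−k. Then rank_{F_{q^m}}(Z) = t, every nonzero F_{q^m}-linear combination of the rows of G̃ has rank weight at least t+2, every F_{q^m}-linear combination of rows of Z has rank weight at most t, and consequently the stacked matrix [G̃; Z] has F_{q^m}-rank (n−t−1) + t = n−1. -/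

import Mathlib

open Matrix

noncomputable def extV {K L : Type} [Field K] [Field L] [Algebra K L]
    {m n : ℕ} (γ : Module.Basis (Fin m) K L) (v : Fin n → L) : Matrix (Fin m) (Fin n) K :=
  Matrix.of fun i j => γ.repr (v j) i

noncomputable def extM {K L : Type} [Field K] [Field L] [Algebra K L]
    {m n : ℕ} {ι : Type} (γ : Module.Basis (Fin m) K L) (E : Matrix ι (Fin n) L) :
    Matrix (ι × Fin m) (Fin n) K :=
  Matrix.of fun p j => γ.repr (E p.1 j) p.2

/-!
Since `rank_{F_q} E = t`, the matrix factors as `E = A B` with `B` a `t × n` matrix over `F_q`.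
Frobenius fixes `B`, so `E^{[r]} = A^{[r]} B` and `Z = A' B`: thus `rank Z ≤ t`, with equality
because `E` is a block of `Z`; and every combination of rows of `Z` has the form `w B`, whose
entries lie in the `F_q`-span of `w_1, …, w_t`, so its rank weight is at most `t`.

A combination `c G̃` of the Moore rows is `(f(g_1), …, f(g_n))` for the `F_q`-linear map
`f x = ∑ cᵢ x^{q^i}`. Its kernel consists of roots of a nonzero polynomial of degree at most
`q^{n-t-2}`, so `dim ker f ≤ n-t-2` and `c G̃` has rank weight at least `n - (n-t-2) = t+2`.
This weight gap makes the rows of `G̃` independent and its row space meet that of `Z` trivially,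
so `rank [G̃; Z] = (n-t-1) + t`.
-/

open Module Submodule

section RankWeight

variable {K L : Type} [Field K] [Field L] [Algebra K L] {m n : ℕ}

theorem rank_extV_eq_finrank_span (γ : Basis (Fin m) K L) (v : Fin n → L) :
    (extV γ v).rank = finrank K (span K (Set.range v)) := by
  rw [rank_eq_finrank_span_cols, show Set.range (extV γ v).col = γ.equivFun '' Set.range v by
    rw [← Set.range_comp]; rfl, span_image_linearEquiv, LinearEquiv.finrank_map_eq]

theorem extV_vecMul_map_algebraMap {t : ℕ} (γ : Basis (Fin m) K L) (w : Fin t → L)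
    (B : Matrix (Fin t) (Fin n) K) :
    extV γ (w ᵥ* B.map (algebraMap K L)) = extV γ w * B := by
  ext i j
  simp only [extV, of_apply, vecMul, dotProduct, Matrix.mul_apply, map_apply, map_sum,
    Finsupp.coe_finsetSum, Finset.sum_apply]
  refine Finset.sum_congr rfl fun s _ => ?_
  rw [mul_comm, ← Algebra.smul_def, map_smul, Finsupp.smul_apply, smul_eq_mul, mul_comm]

theorem rank_extV_vecMul_map_algebraMap_le {t : ℕ} (γ : Basis (Fin m) K L) (w : Fin t → L)
    (B : Matrix (Fin t) (Fin n) K) :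
    (extV γ (w ᵥ* B.map (algebraMap K L))).rank ≤ t := by
  rw [extV_vecMul_map_algebraMap]
  exact (rank_mul_le_left _ _).trans (rank_le_width _)

end RankWeight

theorem Matrix.exists_eq_mul_of_rank_eq {R ι : Type} [Field R] [Finite ι] {n r : ℕ}
    (M : Matrix ι (Fin n) R) (hM : M.rank = r) :
    ∃ (C : Matrix ι (Fin r) R) (B : Matrix (Fin r) (Fin n) R), M = C * B := by
  set W := span R (Set.range M.row)
  have hW : finrank R W = r := by rw [← hM, rank_eq_finrank_span_row]
  let β : Basis (Fin r) R W := (finBasis R W).reindex (finCongr hW)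
  have hmem (i : ι) : M i ∈ W := subset_span (Set.mem_range_self i)
  refine ⟨of fun i s => β.repr ⟨M i, hmem i⟩ s, of fun s => (β s : Fin n → R), ?_⟩
  ext i j
  have hrow := congrFun (congrArg Subtype.val (β.sum_repr ⟨M i, hmem i⟩)) j
  simp only [coe_sum, coe_smul, Finset.sum_apply, Pi.smul_apply, smul_eq_mul] at hrow
  simp only [Matrix.mul_apply, of_apply, hrow]

theorem exists_eq_mul_map_algebraMap_of_rank_extM {K L ι : Type} [Field K] [Field L]
    [Algebra K L] [Finite ι] {m n t : ℕ} (γ : Basis (Fin m) K L) (E : Matrix ι (Fin n) L)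
    (hE : (extM γ E).rank = t) :
    ∃ (A : Matrix ι (Fin t) L) (B : Matrix (Fin t) (Fin n) K),
      E = A * B.map (algebraMap K L) := by
  obtain ⟨C, B, hCB⟩ := (extM γ E).exists_eq_mul_of_rank_eq hE
  refine ⟨of fun i s => ∑ p, C (i, p) s • γ p, B, ?_⟩
  ext i j
  have hcoord (p : Fin m) : γ.repr (E i j) p = ∑ s, C (i, p) s * B s j :=
    congrFun (congrFun hCB (i, p)) j
  rw [← γ.sum_repr (E i j)]
  simp only [hcoord, Matrix.mul_apply, of_apply, map_apply, Finset.sum_smul, Finset.sum_mul]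
  rw [Finset.sum_comm]
  refine Finset.sum_congr rfl fun s _ => Finset.sum_congr rfl fun p _ => ?_
  rw [mul_smul, smul_mul_assoc, Algebra.smul_def (B s j), mul_comm (algebraMap K L _)]

section FrobeniusPowers

open Polynomial

variable {L : Type} (q : ℕ)

def frobeniusStack [Monoid L] {ι κ : Type} (E : Matrix ι κ L) (d : ℕ) :
    Matrix (Fin d × ι) κ L :=
  of fun p j => E p.2 j ^ q ^ (p.1 : ℕ)

def mooreMatrix [Monoid L] {κ : Type} (g : κ → L) (d : ℕ) : Matrix (Fin d) κ L :=
  of fun i j => g j ^ q ^ (i : ℕ)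

noncomputable def linearizedPoly [Semiring L] {d : ℕ} (c : Fin d → L) : L[X] :=
  ∑ i, C (c i) * X ^ q ^ (i : ℕ)

theorem frobeniusStack_submatrix_zero [Monoid L] {ι κ : Type} {d : ℕ} (hd : 0 < d)
    (E : Matrix ι κ L) :
    (frobeniusStack q E d).submatrix (fun i => ((⟨0, hd⟩ : Fin d), i)) id = E := by
  ext i j
  simp [frobeniusStack]

variable {q} [Semiring L]

theorem natDegree_linearizedPoly_le (hq : 0 < q) {d : ℕ} (c : Fin d → L) :
    (linearizedPoly q c).natDegree ≤ q ^ (d - 1) :=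
  natDegree_sum_le_of_forall_le _ _ fun i _ =>
    (natDegree_C_mul_le _ _).trans <|
      (natDegree_X_pow_le _).trans (Nat.pow_le_pow_right hq (by omega))

theorem coeff_linearizedPoly (hq : 1 < q) {d : ℕ} (c : Fin d → L) (i : Fin d) :
    (linearizedPoly q c).coeff (q ^ (i : ℕ)) = c i := by
  rw [linearizedPoly, finsetSum_coeff, Finset.sum_eq_single i]
  · simp
  · intro j _ hji
    rw [coeff_C_mul, coeff_X_pow, if_neg, mul_zero]
    exact fun h => hji (Fin.val_injective (Nat.pow_right_injective hq h.symm))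
  · simp

theorem linearizedPoly_ne_zero (hq : 1 < q) {d : ℕ} {c : Fin d → L} (hc : c ≠ 0) :
    linearizedPoly q c ≠ 0 := by
  obtain ⟨i, hi⟩ := Function.ne_iff.mp hc
  exact fun h => hi (by rw [← coeff_linearizedPoly hq c i, h, coeff_zero, Pi.zero_apply])

end FrobeniusPowers

section FiniteFieldAlgebra

open Polynomial

variable (K : Type) {L : Type} [Field K] [Fintype K] [CommRing L] [Algebra K L]

theorem frobeniusAlgHom_pow_apply (r : ℕ) (x : L) :
    (FiniteField.frobeniusAlgHom K L ^ r) x = x ^ Fintype.card K ^ r := by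
  rw [AlgHom.coe_pow, FiniteField.coe_frobeniusAlgHom, pow_iterate]

theorem frobeniusStack_mul_map_algebraMap {ι κ : Type} {t d : ℕ}
    (A : Matrix ι (Fin t) L) (B : Matrix (Fin t) κ K) :
    frobeniusStack (Fintype.card K) (A * B.map (algebraMap K L)) d =
      frobeniusStack (Fintype.card K) A d * B.map (algebraMap K L) := by
  ext p j
  simp only [frobeniusStack, of_apply, Matrix.mul_apply, map_apply,
    ← frobeniusAlgHom_pow_apply, map_sum, map_mul, AlgHom.commutes]

def qLinearMap {d : ℕ} (c : Fin d → L) : L →ₗ[K] L :=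
  ∑ i, c i • (FiniteField.frobeniusAlgHom K L ^ (i : ℕ)).toLinearMap

theorem qLinearMap_apply {d : ℕ} (c : Fin d → L) (x : L) :
    qLinearMap K c x = ∑ i, c i * x ^ Fintype.card K ^ (i : ℕ) := by
  simp [qLinearMap, FiniteField.coe_frobeniusAlgHom, pow_iterate]

theorem vecMul_mooreMatrix {κ : Type} {d : ℕ} (c : Fin d → L) (g : κ → L) :
    c ᵥ* mooreMatrix (Fintype.card K) g d = qLinearMap K c ∘ g := by
  ext j
  simp [vecMul, dotProduct, mooreMatrix, qLinearMap_apply]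

theorem eval_linearizedPoly {d : ℕ} (c : Fin d → L) (x : L) :
    (linearizedPoly (Fintype.card K) c).eval x = qLinearMap K c x := by
  simp [linearizedPoly, eval_finsetSum, qLinearMap_apply]

end FiniteFieldAlgebra

section FiniteFieldExtension

open Polynomial

variable (K : Type) {L : Type} [Field K] [Fintype K] [Field L] [Algebra K L]

theorem rank_frobeniusStack {ι κ : Type} [Fintype κ] {t d : ℕ} (hd : 0 < d)
    {E : Matrix ι κ L} (A : Matrix ι (Fin t) L) (B : Matrix (Fin t) κ K)
    (hAB : E = A * B.map (algebraMap K L)) (hE : E.rank = t) :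
    (frobeniusStack (Fintype.card K) E d).rank = t := by
  refine le_antisymm ?_ ?_
  · rw [hAB, frobeniusStack_mul_map_algebraMap]
    exact (rank_mul_le_right _ _).trans ((rank_le_card_height _).trans_eq (Fintype.card_fin t))
  · rw [← hE]
    conv_lhs => rw [← frobeniusStack_submatrix_zero (Fintype.card K) hd E]
    exact rank_submatrix_le _ _ _

theorem ncard_ker_qLinearMap_le {d : ℕ} {c : Fin d → L} (hc : c ≠ 0) :
    (LinearMap.ker (qLinearMap K c) : Set L).ncard ≤ Fintype.card K ^ (d - 1) := by
  have hroots : (LinearMap.ker (qLinearMap K c) : Set L) ⊆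
      (linearizedPoly (Fintype.card K) c).rootSet L := by
    intro x hx
    rw [mem_rootSet, coe_aeval_eq_eval, eval_linearizedPoly]
    exact ⟨linearizedPoly_ne_zero Fintype.one_lt_card hc, hx⟩
  calc _ ≤ ((linearizedPoly (Fintype.card K) c).rootSet L).ncard :=
        Set.ncard_le_ncard hroots (rootSet_finite _ _)
    _ ≤ (linearizedPoly (Fintype.card K) c).natDegree := ncard_rootSet_le _ _
    _ ≤ Fintype.card K ^ (d - 1) := natDegree_linearizedPoly_le Fintype.card_pos c

theorem finrank_ker_qLinearMap_lt [Module.Finite K L] {d : ℕ} {c : Fin d → L} (hc : c ≠ 0) :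
    finrank K (LinearMap.ker (qLinearMap K c)) < d := by
  have hcard : Fintype.card K ^ finrank K (LinearMap.ker (qLinearMap K c)) ≤
      Fintype.card K ^ (d - 1) :=
    calc _ = Nat.card (LinearMap.ker (qLinearMap K c)) := by
          rw [natCard_eq_pow_finrank (K := K), Nat.card_eq_fintype_card]
      _ = (LinearMap.ker (qLinearMap K c) : Set L).ncard := Nat.card_coe_set_eq _
      _ ≤ _ := ncard_ker_qLinearMap_le K hc
  have hd : 0 < d := Nat.pos_of_ne_zero fun h => hc (by subst h; exact Subsingleton.elim _ _)
  have := (Nat.pow_le_pow_iff_right Fintype.one_lt_card).mp hcard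
  omega

end FiniteFieldExtension

theorem LinearMap.finrank_le_finrank_map_add_finrank_ker {K V W : Type} [Field K]
    [AddCommGroup V] [Module K V] [FiniteDimensional K V] [AddCommGroup W] [Module K W]
    (f : V →ₗ[K] W) (S : Submodule K V) :
    finrank K S ≤ finrank K (S.map f) + finrank K (LinearMap.ker f) := by
  have h := (f.domRestrict S).finrank_range_add_finrank_ker
  rw [LinearMap.range_domRestrict, LinearMap.ker_domRestrict, ← finrank_map_subtype_eq,
    map_comap_subtype] at h
  exact h.symm.le.trans (Nat.add_le_add_left (finrank_mono inf_le_right) _)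

theorem lt_rank_extV_vecMul_mooreMatrix_add {K L : Type} [Field K] [Fintype K] [Field L]
    [Algebra K L] {m n d : ℕ} (γ : Basis (Fin m) K L) {g : Fin n → L}
    (hg : (extV γ g).rank = n) {c : Fin d → L} (hc : c ≠ 0) :
    n < (extV γ (c ᵥ* mooreMatrix (Fintype.card K) g d)).rank + d := by
  have := Module.Finite.of_basis γ
  rw [vecMul_mooreMatrix, rank_extV_eq_finrank_span, Set.range_comp, ← map_span]
  calc n = finrank K (span K (Set.range g)) := by rw [← rank_extV_eq_finrank_span γ, hg]
    _ ≤ _ := (qLinearMap K c).finrank_le_finrank_map_add_finrank_ker _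
    _ < _ := Nat.add_lt_add_left (finrank_ker_qLinearMap_lt K hc) _

theorem Matrix.rank_fromRows_eq_card_add_rank {R m₁ m₂ κ : Type} [Field R] [Fintype m₁]
    [Fintype m₂] [Fintype κ] (A : Matrix m₁ κ R) (B : Matrix m₂ κ R)
    (h : ∀ a b, a ᵥ* A = b ᵥ* B → a = 0) :
    (fromRows A B).rank = Fintype.card m₁ + B.rank := by
  have hA : LinearIndependent R A.row := Fintype.linearIndependent_iff.mpr fun a ha =>
    congrFun (h a 0 (by rw [vecMul_eq_sum, zero_vecMul]; exact ha))
  have hAB : span R (Set.range A.row) ⊓ span R (Set.range B.row) = ⊥ := by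
    rw [eq_bot_iff]
    rintro x ⟨hxA, hxB⟩
    rw [SetLike.mem_coe, ← range_vecMulLinear] at hxA hxB
    obtain ⟨a, rfl⟩ := hxA
    obtain ⟨b, hb⟩ := hxB
    simp [h a b hb.symm]
  calc (fromRows A B).rank
      = finrank R ↥(span R (Set.range A.row) ⊔ span R (Set.range B.row)) := by
        rw [rank_eq_finrank_span_row, ← span_union, ← Set.Sum.elim_range]
        rfl
    _ = finrank R ↥(span R (Set.range A.row) ⊔ span R (Set.range B.row)) +
          finrank R ↥(span R (Set.range A.row) ⊓ span R (Set.range B.row)) := by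
        rw [hAB, finrank_bot, add_zero]
    _ = Fintype.card m₁ + B.rank := by
        rw [finrank_sup_add_finrank_inf_eq, finrank_span_eq_card hA, rank_eq_finrank_span_row]

theorem loidreau_overbeck_rank_general {m n k ℓ t : ℕ} (K L : Type) [Field K] [Fintype K]
    [Field L] [Algebra K L]
    (γ : Module.Basis (Fin m) K L)
    (g : Fin n → L) (hg : (extV γ g).rank = n)
    (E : Matrix (Fin ℓ) (Fin n) L) (hEq : (extM γ E).rank = t) (hEqm : E.rank = t)
    (htk : t < n - k) :
    (Matrix.of fun (p : Fin (n - k - t) × Fin ℓ) (j : Fin n) =>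
        E p.2 j ^ Fintype.card K ^ (p.1 : ℕ)).rank = t ∧
    (∀ c : Fin (n - t - 1) → L, c ≠ 0 →
      t + 2 ≤ (extV γ (c ᵥ* Matrix.of fun (i : Fin (n - t - 1)) (j : Fin n) =>
        g j ^ Fintype.card K ^ (i : ℕ))).rank) ∧
    (∀ c : Fin (n - k - t) × Fin ℓ → L,
      (extV γ (c ᵥ* Matrix.of fun (p : Fin (n - k - t) × Fin ℓ) (j : Fin n) =>
        E p.2 j ^ Fintype.card K ^ (p.1 : ℕ))).rank ≤ t) ∧
    (Matrix.fromRows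
        (Matrix.of fun (i : Fin (n - t - 1)) (j : Fin n) => g j ^ Fintype.card K ^ (i : ℕ))
        (Matrix.of fun (p : Fin (n - k - t) × Fin ℓ) (j : Fin n) =>
          E p.2 j ^ Fintype.card K ^ (p.1 : ℕ))).rank = n - 1 := by
  obtain ⟨A, B, hAB⟩ := exists_eq_mul_map_algebraMap_of_rank_extM γ E hEq
  have hZ_rank : (frobeniusStack (Fintype.card K) E (n - k - t)).rank = t :=
    rank_frobeniusStack K (by omega) A B hAB hEqm
  have hG_weight (c : Fin (n - t - 1) → L) (hc : c ≠ 0) :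
      t + 2 ≤ (extV γ (c ᵥ* mooreMatrix (Fintype.card K) g (n - t - 1))).rank := by
    have := lt_rank_extV_vecMul_mooreMatrix_add γ hg hc
    omega
  have hZ_weight (c : Fin (n - k - t) × Fin ℓ → L) :
      (extV γ (c ᵥ* frobeniusStack (Fintype.card K) E (n - k - t))).rank ≤ t := by
    rw [hAB, frobeniusStack_mul_map_algebraMap, ← vecMul_vecMul]
    exact rank_extV_vecMul_map_algebraMap_le γ _ B
  refine ⟨hZ_rank, hG_weight, hZ_weight, ?_⟩
  have hdisjoint (a : Fin (n - t - 1) → L) (b : Fin (n - k - t) × Fin ℓ → L)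
      (hab : a ᵥ* mooreMatrix (Fintype.card K) g (n - t - 1) =
        b ᵥ* frobeniusStack (Fintype.card K) E (n - k - t)) : a = 0 := by
    by_contra ha
    have hG := hG_weight a ha
    have hZ := hZ_weight b
    rw [hab] at hG
    omega
  have := rank_fromRows_eq_card_add_rank _ _ hdisjoint
  rw [Fintype.card_fin, hZ_rank] at this
  exact this.trans (by omega)

/-- success of the Loidreau–Overbeck decoder: let `g ∈ F_{q^m}^n` with
`rank_q(g) = n ≤ m`, let `G̃` be the Moore matrix with rows `g, g^{[1]}, …, g^{[n-t-2]}`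
(`[i]` being the entrywise Frobenius power `q^i`), and let `E ∈ F_{q^m}^{ℓ×n}` with
`rank_{F_q}(E) = rank_{F_{q^m}}(E) = t`, `t < n - k`. Let `Z` be the vertical stack of
`E, E^{[1]}, …, E^{[n-k-t-1]}`. Then `rank_{F_{q^m}}(Z) = t`, every nonzero
`F_{q^m}`-combination of rows of `G̃` has rank weight at least `t+2`, every
`F_{q^m}`-combination of rows of `Z` has rank weight at most `t`, and the stack `[G̃; Z]`
has `F_{q^m}`-rank `(n-t-1) + t = n-1`. -/
theorem loidreau_overbeck_rank {q m n k ℓ t : ℕ} (K L : Type) [Field K] [Fintype K]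
    [Field L] [Fintype L] [Algebra K L] (hK : Fintype.card K = q) (hL : Fintype.card L = q ^ m)
    (γ : Module.Basis (Fin m) K L)
    (g : Fin n → L) (hg : (extV γ g).rank = n) (hnm : n ≤ m)
    (E : Matrix (Fin ℓ) (Fin n) L) (hEq : (extM γ E).rank = t) (hEqm : E.rank = t)
    (htk : t < n - k) (htn : t + 2 ≤ n) :
    (Matrix.of fun (p : Fin (n - k - t) × Fin ℓ) (j : Fin n) =>
        E p.2 j ^ Fintype.card K ^ (p.1 : ℕ)).rank = t ∧
    (∀ c : Fin (n - t - 1) → L, c ≠ 0 →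
      t + 2 ≤ (extV γ (c ᵥ* Matrix.of fun (i : Fin (n - t - 1)) (j : Fin n) =>
        g j ^ Fintype.card K ^ (i : ℕ))).rank) ∧
    (∀ c : Fin (n - k - t) × Fin ℓ → L,
      (extV γ (c ᵥ* Matrix.of fun (p : Fin (n - k - t) × Fin ℓ) (j : Fin n) =>
        E p.2 j ^ Fintype.card K ^ (p.1 : ℕ))).rank ≤ t) ∧
    (Matrix.fromRows
        (Matrix.of fun (i : Fin (n - t - 1)) (j : Fin n) => g j ^ Fintype.card K ^ (i : ℕ))
        (Matrix.of fun (p : Fin (n - k - t) × Fin ℓ) (j : Fin n) =>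
          E p.2 j ^ Fintype.card K ^ (p.1 : ℕ))).rank = n - 1 :=
  loidreau_overbeck_rank_general K L γ g hg E hEq hEqm htk
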